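/- arXiv:2205.00245 — 5 statements merged into one kernel-verified Lean document; each statement's English description precedes it below -/
import Mathlib

section
/- Let A be a bi-asimulation between constant-domain Kripke models M₀ and M₁ for a signature Σ. Then for all world-tuple pairs (w,ā) A (v,b̄) with ā ∈ D_i^n, b̄ ∈ D_j^n, and every formula φ of first-order bi-intuitionistic logic with free variables among x₁,...,xₙ: if (M_i; D_i), w ⊨ φ[ā/x̄] then (M_j; D_j), v ⊨ φ[b̄/x̄]. -/
set_option linter.constructorNameAsVariable false

/-- A relational signature (predicate symbols with arities; no function symbols). -/
structure Signature where
  Pred : Type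
  arity : Pred → ℕ

/-- Formulas of first-order bi-intuitionistic logic in context `n`
(de Bruijn style: free variables are `Fin n`). -/
inductive Fml (S : Signature) : ℕ → Type where
  | atom : {n : ℕ} → (P : S.Pred) → (Fin (S.arity P) → Fin n) → Fml S n
  | bot {n} : Fml S n
  | top {n} : Fml S n
  | and {n} : Fml S n → Fml S n → Fml S n
  | or {n} : Fml S n → Fml S n → Fml S n
  | imp {n} : Fml S n → Fml S n → Fml S n
  | coimp {n} : Fml S n → Fml S n → Fml S n
  | all {n} : Fml S (n + 1) → Fml S n
  | ex {n} : Fml S (n + 1) → Fml S n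

/-- A constant-domain Kripke model for first-order bi-intuitionistic logic. -/
structure KModel (S : Signature) where
  W : Type
  R : W → W → Prop
  refl : ∀ w, R w w
  trans : ∀ {u v w}, R u v → R v w → R u w
  D : Type
  dne : Nonempty D
  V : (P : S.Pred) → W → Set (Fin (S.arity P) → D)
  mono : ∀ (P : S.Pred) {w v : W}, R w v → V P w ⊆ V P v

/-- The forcing relation for constant-domain Kripke semantics. -/
def force {S : Signature} (M : KModel S) :
    {n : ℕ} → M.W → (Fin n → M.D) → Fml S n → Prop
  | _, w, ρ, .atom P ts => (fun i => ρ (ts i)) ∈ M.V P w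
  | _, _, _, .bot => False
  | _, _, _, .top => True
  | _, w, ρ, .and φ ψ => force M w ρ φ ∧ force M w ρ ψ
  | _, w, ρ, .or φ ψ => force M w ρ φ ∨ force M w ρ ψ
  | _, w, ρ, .imp φ ψ => ∀ v, M.R w v → force M v ρ φ → force M v ρ ψ
  | _, w, ρ, .coimp φ ψ => ∃ v, M.R v w ∧ force M v ρ φ ∧ ¬ force M v ρ ψ
  | _, w, ρ, .all φ => ∀ a : M.D, force M w (Fin.snoc ρ a) φ
  | _, w, ρ, .ex φ => ∃ a : M.D, force M w (Fin.snoc ρ a) φ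

/-- The bi-asimulation conditions: `A` relates `M₀`-pointed-tuples to `M₁`-pointed-tuples,
`B` the converse direction. -/
structure IsBiAsim (S : Signature) (M₀ M₁ : KModel S)
    (A : ∀ n, M₀.W → (Fin n → M₀.D) → M₁.W → (Fin n → M₁.D) → Prop)
    (B : ∀ n, M₁.W → (Fin n → M₁.D) → M₀.W → (Fin n → M₀.D) → Prop) : Prop where
  atomA : ∀ {n} {w da v db}, A n w da v db → ∀ (P : S.Pred) (ts : Fin (S.arity P) → Fin n),
    (fun i => da (ts i)) ∈ M₀.V P w → (fun i => db (ts i)) ∈ M₁.V P v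
  atomB : ∀ {n} {v db w da}, B n v db w da → ∀ (P : S.Pred) (ts : Fin (S.arity P) → Fin n),
    (fun i => db (ts i)) ∈ M₁.V P v → (fun i => da (ts i)) ∈ M₀.V P w
  backA : ∀ {n} {w da v db}, A n w da v db →
    ∀ v₀, M₁.R v v₀ → ∃ w₀, M₀.R w w₀ ∧ A n w₀ da v₀ db ∧ B n v₀ db w₀ da
  backB : ∀ {n} {v db w da}, B n v db w da →
    ∀ w₀, M₀.R w w₀ → ∃ v₀, M₁.R v v₀ ∧ B n v₀ db w₀ da ∧ A n w₀ da v₀ db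
  forthA : ∀ {n} {w da v db}, A n w da v db →
    ∀ w₀, M₀.R w₀ w → ∃ v₀, M₁.R v₀ v ∧ A n w₀ da v₀ db ∧ B n v₀ db w₀ da
  forthB : ∀ {n} {v db w da}, B n v db w da →
    ∀ v₀, M₁.R v₀ v → ∃ w₀, M₀.R w₀ w ∧ B n v₀ db w₀ da ∧ A n w₀ da v₀ db
  leftA : ∀ {n} {w da v db}, A n w da v db →
    ∀ b : M₁.D, ∃ a : M₀.D, A (n + 1) w (Fin.snoc da a) v (Fin.snoc db b)
  leftB : ∀ {n} {v db w da}, B n v db w da →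
    ∀ a : M₀.D, ∃ b : M₁.D, B (n + 1) v (Fin.snoc db b) w (Fin.snoc da a)
  rightA : ∀ {n} {w da v db}, A n w da v db →
    ∀ a : M₀.D, ∃ b : M₁.D, A (n + 1) w (Fin.snoc da a) v (Fin.snoc db b)
  rightB : ∀ {n} {v db w da}, B n v db w da →
    ∀ b : M₁.D, ∃ a : M₀.D, B (n + 1) v (Fin.snoc db b) w (Fin.snoc da a)

/-- bi-intuitionistic formulas are preserved by bi-asimulations. -/
theorem stmt9 (S : Signature) (M₀ M₁ : KModel S)
    (A : ∀ n, M₀.W → (Fin n → M₀.D) → M₁.W → (Fin n → M₁.D) → Prop)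
    (B : ∀ n, M₁.W → (Fin n → M₁.D) → M₀.W → (Fin n → M₀.D) → Prop)
    (h : IsBiAsim S M₀ M₁ A B) :
    (∀ (n : ℕ) (w : M₀.W) (da : Fin n → M₀.D) (v : M₁.W) (db : Fin n → M₁.D),
      A n w da v db → ∀ φ : Fml S n, force M₀ w da φ → force M₁ v db φ) ∧
    (∀ (n : ℕ) (v : M₁.W) (db : Fin n → M₁.D) (w : M₀.W) (da : Fin n → M₀.D),
      B n v db w da → ∀ φ : Fml S n, force M₁ v db φ → force M₀ w da φ) := by
  suffices H : ∀ (n : ℕ) (φ : Fml S n),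
      (∀ w da v db, A n w da v db → force M₀ w da φ → force M₁ v db φ) ∧
      (∀ v db w da, B n v db w da → force M₁ v db φ → force M₀ w da φ) by
    exact ⟨fun n w da v db hA φ => (H n φ).1 w da v db hA,
           fun n v db w da hB φ => (H n φ).2 v db w da hB⟩
  intro n φ
  induction φ with
  | atom P ts =>
    exact ⟨fun w da v db hA hf => h.atomA hA P ts hf,
           fun v db w da hB hf => h.atomB hB P ts hf⟩
  | bot => exact ⟨fun _ _ _ _ _ hf => hf.elim, fun _ _ _ _ _ hf => hf.elim⟩
  | top => exact ⟨fun _ _ _ _ _ _ => trivial, fun _ _ _ _ _ _ => trivial⟩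
  | and φ ψ ihφ ihψ =>
    exact ⟨fun w da v db hA hf => ⟨ihφ.1 w da v db hA hf.1, ihψ.1 w da v db hA hf.2⟩,
           fun v db w da hB hf => ⟨ihφ.2 v db w da hB hf.1, ihψ.2 v db w da hB hf.2⟩⟩
  | or φ ψ ihφ ihψ =>
    exact ⟨fun w da v db hA hf => hf.elim (fun hf => Or.inl (ihφ.1 w da v db hA hf))
             (fun hf => Or.inr (ihψ.1 w da v db hA hf)),
           fun v db w da hB hf => hf.elim (fun hf => Or.inl (ihφ.2 v db w da hB hf))
             (fun hf => Or.inr (ihψ.2 v db w da hB hf))⟩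
  | imp φ ψ ihφ ihψ =>
    constructor
    · intro w da v db hA hf v₀ hR hφ
      obtain ⟨w₀, hRw, hA', hB'⟩ := h.backA hA v₀ hR
      exact ihψ.1 w₀ da v₀ db hA' (hf w₀ hRw (ihφ.2 v₀ db w₀ da hB' hφ))
    · intro v db w da hB hf w₀ hR hφ
      obtain ⟨v₀, hRv, hB', hA'⟩ := h.backB hB w₀ hR
      exact ihψ.2 v₀ db w₀ da hB' (hf v₀ hRv (ihφ.1 w₀ da v₀ db hA' hφ))
  | coimp φ ψ ihφ ihψ =>
    constructor
    · intro w da v db hA hf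
      obtain ⟨u, hRu, hφ, hψ⟩ := hf
      obtain ⟨v₀, hRv, hA', hB'⟩ := h.forthA hA u hRu
      exact ⟨v₀, hRv, ihφ.1 u da v₀ db hA' hφ,
        fun hc => hψ (ihψ.2 v₀ db u da hB' hc)⟩
    · intro v db w da hB hf
      obtain ⟨u, hRu, hφ, hψ⟩ := hf
      obtain ⟨w₀, hRw, hB', hA'⟩ := h.forthB hB u hRu
      exact ⟨w₀, hRw, ihφ.2 u db w₀ da hB' hφ,
        fun hc => hψ (ihψ.1 w₀ da u db hA' hc)⟩
  | all φ ihφ =>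
    constructor
    · intro w da v db hA hf b
      obtain ⟨a, hA'⟩ := h.leftA hA b
      exact ihφ.1 w _ v _ hA' (hf a)
    · intro v db w da hB hf a
      obtain ⟨b, hB'⟩ := h.leftB hB a
      exact ihφ.2 v _ w _ hB' (hf b)
  | ex φ ihφ =>
    constructor
    · intro w da v db hA hf
      obtain ⟨a, hφ⟩ := hf
      obtain ⟨b, hA'⟩ := h.rightA hA a
      exact ⟨b, ihφ.1 w _ v _ hA' hφ⟩
    · intro v db w da hB hf
      obtain ⟨b, hφ⟩ := hf
      obtain ⟨a, hB'⟩ := h.rightB hB b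
      exact ⟨a, ihφ.2 v _ w _ hB' hφ⟩
end

section
/- Let M₁ be the constant-domain Kripke model whose worlds are all quasi-partitions with accessibility ≺₁, domain ℕ₊, V(P,(A,B,C)) = A ∪ B, V(Q,(A,B,C)) = A, and R interpreted by σ₁(A,B,C) = {n : f(n) ∈ A} for a fixed surjection f : ℕ₊ → v₂. Then at the world v = (3ℕ₊, 3ℕ₊+1, 3ℕ₊+2), the sentence ∀x∃y(P(y) ∧ (Q(y) → R(x))) ∧ ¬∀x R(x) holds. -/
set_option linter.constructorNameAsVariable false

/-- A quasi-partition of the positive natural numbers. -/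
@[ext] structure QP where
  A : Set ℕ+
  B : Set ℕ+
  C : Set ℕ+
  union_eq : A ∪ B ∪ C = Set.univ
  dAB : Disjoint A B
  dAC : Disjoint A C
  dBC : Disjoint B C
  infA : A.Infinite
  infC : C.Infinite
  hB : B = ∅ ∨ B.Infinite

/-- The relation ⊴ on quasi-partitions. -/
def QP.le (p q : QP) : Prop := p.A ⊆ q.A ∧ q.C ⊆ p.C

lemma QP.mem_cases (p : QP) (x : ℕ+) : x ∈ p.A ∨ x ∈ p.B ∨ x ∈ p.C := by
  have hx : x ∈ p.A ∪ p.B ∪ p.C := by rw [p.union_eq]; trivial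
  rcases hx with (h | h) | h
  · exact Or.inl h
  · exact Or.inr (Or.inl h)
  · exact Or.inr (Or.inr h)

lemma QP.B_compl (p : QP) : p.B = (p.A ∪ p.C)ᶜ := by
  ext x
  simp only [Set.mem_compl_iff, Set.mem_union]
  constructor
  · intro hx
    push_neg
    exact ⟨fun hA => Set.disjoint_left.mp p.dAB hA hx,
           Set.disjoint_left.mp p.dBC hx⟩
  · intro hx
    push_neg at hx
    rcases p.mem_cases x with h | h | h
    · exact absurd h hx.1
    · exact h
    · exact absurd h hx.2

lemma QP.le_refl (p : QP) : p.le p := ⟨subset_rfl, subset_rfl⟩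

lemma QP.le_trans {p q r : QP} (h1 : p.le q) (h2 : q.le r) : p.le r :=
  ⟨h1.1.trans h2.1, h2.2.trans h1.2⟩

lemma QP.le_antisymm {p q : QP} (h1 : p.le q) (h2 : q.le p) : p = q := by
  have hA : p.A = q.A := Set.Subset.antisymm h1.1 h2.1
  have hC : p.C = q.C := Set.Subset.antisymm h2.2 h1.2
  have hBc : p.B = q.B := by rw [p.B_compl, q.B_compl, hA, hC]
  exact QP.ext hA hBc hC

lemma QP.monoP {p q : QP} (h : p.le q) : p.A ∪ p.B ⊆ q.A ∪ q.B := by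
  intro x hx
  have hxc : x ∉ p.C := by
    rcases hx with h1 | h1
    · exact Set.disjoint_left.mp p.dAC h1
    · exact Set.disjoint_left.mp p.dBC h1
  have hqc : x ∉ q.C := fun hc => hxc (h.2 hc)
  rcases q.mem_cases x with h1 | h1 | h1
  · exact Or.inl h1
  · exact Or.inr h1
  · exact absurd h1 hqc

lemma infinite_mod {m r : ℕ} (hm : 0 < m) (hr : r < m) :
    {n : ℕ+ | (n : ℕ) % m = r}.Infinite := by
  apply Set.infinite_of_injective_forall_mem
    (f := fun k : ℕ => (⟨m * (k + 1) + r, Nat.add_pos_left (Nat.mul_pos hm k.succ_pos) r⟩ : ℕ+))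
  · intro k j h
    have h' : m * (k + 1) + r = m * (j + 1) + r :=
      congrArg (fun x : ℕ+ => (x : ℕ)) h
    have := Nat.eq_of_mul_eq_mul_left hm (Nat.add_right_cancel h')
    omega
  · intro k
    show (m * (k + 1) + r) % m = r
    rw [add_comm, Nat.add_mul_mod_self_left, Nat.mod_eq_of_lt hr]

def v1 : Set ℕ+ := {n | (n : ℕ) % 3 = 0}
def v2 : Set ℕ+ := {n | (n : ℕ) % 3 = 1}
def v3 : Set ℕ+ := {n | (n : ℕ) % 3 = 2}
def w1 : Set ℕ+ := {n | (n : ℕ) % 2 = 0}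
def w3 : Set ℕ+ := {n | (n : ℕ) % 2 = 1}

/-- The quasi-partition v = (3ℕ₊, 3ℕ₊+1, 3ℕ₊+2). -/
def vQP : QP where
  A := v1
  B := v2
  C := v3
  union_eq := by ext n; simp only [v1, v2, v3, Set.mem_union, Set.mem_setOf_eq, Set.mem_univ, iff_true]; omega
  dAB := by rw [Set.disjoint_left]; intro n h1 h2; simp only [v1, v2, Set.mem_setOf_eq] at h1 h2; omega
  dAC := by rw [Set.disjoint_left]; intro n h1 h2; simp only [v1, v3, Set.mem_setOf_eq] at h1 h2; omega
  dBC := by rw [Set.disjoint_left]; intro n h1 h2; simp only [v2, v3, Set.mem_setOf_eq] at h1 h2; omega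
  infA := infinite_mod (by norm_num) (by norm_num)
  infC := infinite_mod (by norm_num) (by norm_num)
  hB := Or.inr (infinite_mod (by norm_num) (by norm_num))

/-- The quasi-partition w = (2ℕ₊, ∅, 2ℕ₊+1). -/
def wQP : QP where
  A := w1
  B := ∅
  C := w3
  union_eq := by ext n; simp only [w1, w3, Set.mem_union, Set.mem_setOf_eq, Set.mem_empty_iff_false, Set.mem_univ, iff_true, or_false]; omega
  dAB := by simp
  dAC := by rw [Set.disjoint_left]; intro n h1 h2; simp only [w1, w3, Set.mem_setOf_eq] at h1 h2; omega
  dBC := by simp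
  infA := infinite_mod (by norm_num) (by norm_num)
  infC := infinite_mod (by norm_num) (by norm_num)
  hB := Or.inl rfl

/-- The relation ≺₁ on quasi-partitions. -/
def prec1 (p q : QP) : Prop :=
  p.le q ∧ ((vQP.le p ∧ (p.B ∩ v2).Infinite) → (q.B ∩ v2).Infinite)

lemma prec1_refl (p : QP) : prec1 p p := ⟨p.le_refl, fun h => h.2⟩

lemma prec1_trans {p q r : QP} (h1 : prec1 p q) (h2 : prec1 q r) : prec1 p r := by
  refine ⟨QP.le_trans h1.1 h2.1, fun h => ?_⟩
  exact h2.2 ⟨QP.le_trans h.1 h1.1, h1.2 h⟩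


inductive Pred11 | P | Q | R
abbrev Sig11 : Signature := ⟨Pred11, fun _ => 1⟩


/-- The model M₁' over {P,Q,R}, with R interpreted via a fixed map f. -/
@[reducible] def M1mod (f : ℕ+ → ℕ+) : KModel Sig11 where
  W := QP
  R := prec1
  refl := prec1_refl
  trans := prec1_trans
  D := ℕ+
  dne := ⟨1⟩
  V := fun P p => match P with
    | .P => {t | t 0 ∈ p.A ∪ p.B}
    | .Q => {t | t 0 ∈ p.A}
    | .R => {t | f (t 0) ∈ p.A}
  mono := by
    intro P w v h t ht
    cases P
    · exact QP.monoP h.1 ht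
    · exact h.1.1 ht
    · exact h.1.1 ht


/-- The sentence φ = ∀x∃y(P(y) ∧ (Q(y) → R(x))) ∧ ¬∀x R(x). -/
def phi11 : Fml Sig11 0 :=
  .and
    (.all (.ex (.and (.atom .P ![1]) (.imp (.atom .Q ![1]) (.atom .R ![0])))))
    (.imp (.all (.atom .R ![0])) .bot)


/-- φ = ∀x∃y(P(y) ∧ (Q(y) → R(x))) ∧ ¬∀x R(x) holds at v in M₁'. -/
theorem stmt11 (f : ℕ+ → ℕ+) (hmem : ∀ n, f n ∈ v2) (hsurj : ∀ y ∈ v2, ∃ n, f n = y) :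
    force (M1mod f) vQP Fin.elim0 phi11 := by
  constructor
  · -- ∀x∃y(P(y) ∧ (Q(y) → R(x)))
    intro a
    refine ⟨f a, ?_, ?_⟩
    · -- P(f a): f a ∈ vQP.A ∪ vQP.B
      exact Or.inr (hmem a)
    · -- Q(f a) → R(a)
      intro w _ hQ
      exact hQ
  · -- ¬∀x R(x)
    intro w hw hall
    have hinf : (w.B ∩ v2).Infinite :=
      hw.2 ⟨vQP.le_refl, by
        have : vQP.B ∩ v2 = v2 := by simp [vQP]
        rw [this]
        exact infinite_mod (by norm_num) (by norm_num)⟩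
    obtain ⟨y, hyB, hyv2⟩ := hinf.nonempty
    obtain ⟨n, hn⟩ := hsurj y hyv2
    have h : f n ∈ w.A := by simpa [force, Fin.snoc] using hall n
    rw [hn] at h
    exact Set.disjoint_left.mp w.dAB h hyB
end

section
/- (Back condition for 𝔸, infinite-B case.) Suppose ((A,B,C), ā) 𝔸 ((D,E,F), b̄) with B infinite, and (D,E,F) ⊴ (G,H,I) for some quasi-partition (G,H,I). Define J = (A \ {ā}) ∪ [b̄↦ā](G), K = (B \ {ā}) ∪ [b̄↦ā](H), L = (C \ {ā}) ∪ [b̄↦ā](I), where [b̄↦ā](X) = {a_k : b_k ∈ X}. Then (J,K,L) is a quasi-partition, (A,B,C) ≺₁ (J,K,L), and both ((J,K,L), ā) 𝔸 ((G,H,I), b̄) and ((G,H,I), b̄) 𝔸 ((J,K,L), ā) hold. -/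
set_option linter.constructorNameAsVariable false

/-- The bi-asimulation relation 𝔸 between quasi-partition models. -/
def AA (n : ℕ) (p : QP) (da : Fin n → ℕ+) (q : QP) (db : Fin n → ℕ+) : Prop :=
  (∀ k l, da k = da l ↔ db k = db l) ∧
  (∀ k, da k ∈ p.A → db k ∈ q.A) ∧
  (∀ k, da k ∈ p.B → db k ∈ q.A ∪ q.B)


/-- `transfer src tgt X = {tgt k : src k ∈ X}`, i.e. `[src ↦ tgt](X)`. -/
def transfer {n : ℕ} (src tgt : Fin n → ℕ+) (X : Set ℕ+) : Set ℕ+ :=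
  tgt '' (src ⁻¹' X)


lemma mem_transfer {n : ℕ} {da db : Fin n → ℕ+}
    (hiff : ∀ k l, da k = da l ↔ db k = db l) (X : Set ℕ+) (k : Fin n) :
    da k ∈ transfer db da X ↔ db k ∈ X := by
  constructor
  · rintro ⟨l, hl, he⟩
    rw [Set.mem_preimage, (hiff l k).mp he] at hl; exact hl
  · intro hk; exact ⟨k, hk, rfl⟩

lemma transfer_subset_range {n : ℕ} (src tgt : Fin n → ℕ+) (X : Set ℕ+) :
    transfer src tgt X ⊆ Set.range tgt :=
  Set.image_subset_range _ _

lemma disj_aux {n : ℕ} {da db : Fin n → ℕ+}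
    (hiff : ∀ k l, da k = da l ↔ db k = db l) {P Q X Y : Set ℕ+}
    (hPQ : Disjoint P Q) (hXY : Disjoint X Y) :
    Disjoint ((P \ Set.range da) ∪ transfer db da X)
      ((Q \ Set.range da) ∪ transfer db da Y) := by
  rw [Set.disjoint_union_left, Set.disjoint_union_right, Set.disjoint_union_right]
  refine ⟨⟨hPQ.mono Set.diff_subset Set.diff_subset, ?_⟩, ?_, ?_⟩
  · rw [Set.disjoint_left]; rintro x ⟨_, hx⟩ hy
    exact hx (transfer_subset_range _ _ _ hy)
  · rw [Set.disjoint_right]; rintro x ⟨_, hx⟩ hy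
    exact hx (transfer_subset_range _ _ _ hy)
  · rw [Set.disjoint_left]
    rintro x ⟨k, hk, rfl⟩ ⟨l, hl, he⟩
    rw [Set.mem_preimage, (hiff l k).mp he] at hl
    exact Set.disjoint_left.mp hXY hk hl

/-- back condition for 𝔸, infinite-B case. -/
theorem stmt15 {n : ℕ} (p q r : QP) (da db : Fin n → ℕ+)
    (h : AA n p da q db) (hBinf : p.B.Infinite) (hqr : q.le r) :
    ∃ s : QP,
      s.A = (p.A \ Set.range da) ∪ transfer db da r.A ∧
      s.B = (p.B \ Set.range da) ∪ transfer db da r.B ∧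
      s.C = (p.C \ Set.range da) ∪ transfer db da r.C ∧
      prec1 p s ∧ AA n s da r db ∧ AA n r db s da := by
  obtain ⟨hiff, hA, hB⟩ := h
  have hfin : (Set.range da).Finite := Set.finite_range da
  refine ⟨⟨(p.A \ Set.range da) ∪ transfer db da r.A,
          (p.B \ Set.range da) ∪ transfer db da r.B,
          (p.C \ Set.range da) ∪ transfer db da r.C, ?_, ?_, ?_, ?_, ?_, ?_, ?_⟩,
        rfl, rfl, rfl, ?_, ?_, ?_⟩
  · -- union
    apply Set.eq_univ_of_forall
    intro x
    by_cases hx : x ∈ Set.range da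
    · obtain ⟨k, rfl⟩ := hx
      rcases r.mem_cases (db k) with h1 | h1 | h1
      · exact Or.inl (Or.inl (Or.inr ⟨k, h1, rfl⟩))
      · exact Or.inl (Or.inr (Or.inr ⟨k, h1, rfl⟩))
      · exact Or.inr (Or.inr ⟨k, h1, rfl⟩)
    · rcases p.mem_cases x with h1 | h1 | h1
      · exact Or.inl (Or.inl (Or.inl ⟨h1, hx⟩))
      · exact Or.inl (Or.inr (Or.inl ⟨h1, hx⟩))
      · exact Or.inr (Or.inl ⟨h1, hx⟩)
  · exact disj_aux hiff p.dAB r.dAB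
  · exact disj_aux hiff p.dAC r.dAC
  · exact disj_aux hiff p.dBC r.dBC
  · exact ((p.infA.diff hfin).mono Set.subset_union_left)
  · exact ((p.infC.diff hfin).mono Set.subset_union_left)
  · exact Or.inr ((hBinf.diff hfin).mono Set.subset_union_left)
  · -- prec1
    constructor
    · constructor
      · -- p.A ⊆ s.A
        intro x hx
        by_cases hr : x ∈ Set.range da
        · obtain ⟨k, rfl⟩ := hr
          exact Or.inr ((mem_transfer hiff _ k).mpr (hqr.1 (hA k hx)))
        · exact Or.inl ⟨hx, hr⟩
      · -- s.C ⊆ p.C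
        rintro x (⟨hx, _⟩ | hx)
        · exact hx
        · obtain ⟨k, hk, rfl⟩ := hx
          have hkq : db k ∈ q.C := hqr.2 hk
          rcases p.mem_cases (da k) with h1 | h1 | h1
          · exact absurd (hA k h1) (Set.disjoint_right.mp q.dAC hkq)
          · rcases hB k h1 with h2 | h2
            · exact absurd h2 (Set.disjoint_right.mp q.dAC hkq)
            · exact absurd h2 (Set.disjoint_right.mp q.dBC hkq)
          · exact h1
    · rintro ⟨_, hinf⟩
      refine ((hinf.diff hfin).mono ?_)
      rintro x ⟨⟨hx1, hx2⟩, hx3⟩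
      exact ⟨Or.inl ⟨hx1, hx3⟩, hx2⟩
  · -- AA s da r db
    refine ⟨hiff, ?_, ?_⟩
    · rintro k (⟨_, hk⟩ | hk)
      · exact absurd ⟨k, rfl⟩ hk
      · exact (mem_transfer hiff _ k).mp hk
    · rintro k (⟨_, hk⟩ | hk)
      · exact absurd ⟨k, rfl⟩ hk
      · exact Or.inr ((mem_transfer hiff _ k).mp hk)
  · -- AA r db s da
    refine ⟨fun k l => (hiff k l).symm, ?_, ?_⟩
    · intro k hk
      exact Or.inr ((mem_transfer hiff _ k).mpr hk)
    · intro k hk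
      exact Or.inr (Or.inr ((mem_transfer hiff _ k).mpr hk))
end

section
/- (Back condition for 𝔸, empty-B case.) Suppose ((A,B,C), ā) 𝔸 ((D,E,F), b̄) with B = ∅, and (D,E,F) ⊴ (G,H,I). Let C \ {ā} = C₁ ∪ C₂ be a partition into two disjoint infinite sets, and define J = (A \ {ā}) ∪ [b̄↦ā](G), K = C₁ ∪ [b̄↦ā](H), L = C₂ ∪ [b̄↦ā](I). Then (J,K,L) is a quasi-partition, (A,B,C) ≺₁ (J,K,L), and both ((J,K,L), ā) 𝔸 ((G,H,I), b̄) and ((G,H,I), b̄) 𝔸 ((J,K,L), ā) hold. -/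
set_option linter.constructorNameAsVariable false

/-- back condition for 𝔸, empty-B case. -/
theorem stmt16 {n : ℕ} (p q r : QP) (da db : Fin n → ℕ+)
    (h : AA n p da q db) (hB : p.B = ∅) (hqr : q.le r)
    (C₁ C₂ : Set ℕ+) (hC : C₁ ∪ C₂ = p.C \ Set.range da) (hCdisj : Disjoint C₁ C₂)
    (hC₁ : C₁.Infinite) (hC₂ : C₂.Infinite) :
    ∃ s : QP,
      s.A = (p.A \ Set.range da) ∪ transfer db da r.A ∧
      s.B = C₁ ∪ transfer db da r.B ∧
      s.C = C₂ ∪ transfer db da r.C ∧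
      prec1 p s ∧ AA n s da r db ∧ AA n r db s da := by
  have h1 := h.1
  have memT : ∀ (X : Set ℕ+) (k : Fin n), da k ∈ transfer db da X ↔ db k ∈ X := by
    intro X k
    constructor
    · rintro ⟨l, hl, hlk⟩
      rwa [← (h1 l k).mp hlk]
    · intro hk; exact ⟨k, hk, rfl⟩
  have Tsub : ∀ X, transfer db da X ⊆ Set.range da := by
    rintro X x ⟨l, _, rfl⟩; exact ⟨l, rfl⟩
  have dT : ∀ X Y, Disjoint X Y →
      Disjoint (transfer db da X) (transfer db da Y) := by
    intro X Y hXY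
    rw [Set.disjoint_left]
    rintro x ⟨k, hk, rfl⟩ hx2
    rw [memT] at hx2
    exact Set.disjoint_left.mp hXY hk hx2
  have hC1sub : C₁ ⊆ p.C \ Set.range da := hC ▸ Set.subset_union_left
  have hC2sub : C₂ ⊆ p.C \ Set.range da := hC ▸ Set.subset_union_right
  have hdiffR : ∀ X : Set ℕ+, Disjoint (X \ Set.range da) (Set.range da) :=
    fun X => Set.disjoint_sdiff_left
  have hC1r : Disjoint C₁ (Set.range da) :=
    (hdiffR p.C).mono_left hC1sub
  have hC2r : Disjoint C₂ (Set.range da) :=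
    (hdiffR p.C).mono_left hC2sub
  have hrangeC : ∀ k, db k ∈ r.C → da k ∈ p.C := by
    intro k hk
    have hkq : db k ∈ q.C := hqr.2 hk
    rcases p.mem_cases (da k) with hA | hB' | hC'
    · exact absurd hkq (Set.disjoint_left.mp q.dAC (h.2.1 k hA))
    · rw [hB] at hB'; exact absurd hB' (Set.notMem_empty _)
    · exact hC'
  refine ⟨⟨(p.A \ Set.range da) ∪ transfer db da r.A,
          C₁ ∪ transfer db da r.B,
          C₂ ∪ transfer db da r.C, ?_, ?_, ?_, ?_, ?_, ?_, ?_⟩,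
          rfl, rfl, rfl, ?_, ?_, ?_⟩
  · -- union_eq
    apply Set.eq_univ_of_forall
    intro x
    by_cases hx : x ∈ Set.range da
    · obtain ⟨k, rfl⟩ := hx
      rcases r.mem_cases (db k) with hk | hk | hk
      · exact Or.inl (Or.inl (Or.inr ((memT r.A k).mpr hk)))
      · exact Or.inl (Or.inr (Or.inr ((memT r.B k).mpr hk)))
      · exact Or.inr (Or.inr ((memT r.C k).mpr hk))
    · rcases p.mem_cases x with hk | hk | hk
      · exact Or.inl (Or.inl (Or.inl ⟨hk, hx⟩))
      · rw [hB] at hk; exact absurd hk (Set.notMem_empty _)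
      · have : x ∈ C₁ ∪ C₂ := by rw [hC]; exact ⟨hk, hx⟩
        rcases this with h' | h'
        · exact Or.inl (Or.inr (Or.inl h'))
        · exact Or.inr (Or.inl h')
  · -- dAB
    apply Set.disjoint_union_left.mpr
    constructor
    · apply Set.disjoint_union_right.mpr
      exact ⟨(p.dAC.mono Set.diff_subset (hC1sub.trans Set.diff_subset)),
             (hdiffR p.A).mono_right (Tsub r.B)⟩
    · apply Set.disjoint_union_right.mpr
      exact ⟨(hC1r.symm.mono_left (Tsub r.A)), dT _ _ r.dAB⟩
  · -- dAC
    apply Set.disjoint_union_left.mpr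
    constructor
    · apply Set.disjoint_union_right.mpr
      exact ⟨(p.dAC.mono Set.diff_subset (hC2sub.trans Set.diff_subset)),
             (hdiffR p.A).mono_right (Tsub r.C)⟩
    · apply Set.disjoint_union_right.mpr
      exact ⟨(hC2r.symm.mono_left (Tsub r.A)), dT _ _ r.dAC⟩
  · -- dBC
    apply Set.disjoint_union_left.mpr
    constructor
    · apply Set.disjoint_union_right.mpr
      exact ⟨hCdisj, hC1r.mono_right (Tsub r.C)⟩
    · apply Set.disjoint_union_right.mpr
      exact ⟨(hC2r.symm.mono_left (Tsub r.B)), dT _ _ r.dBC⟩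
  · -- infA
    exact ((p.infA.diff (Set.finite_range da)).mono Set.subset_union_left)
  · -- infC
    exact (hC₂.mono Set.subset_union_left)
  · -- hB
    exact Or.inr (hC₁.mono Set.subset_union_left)
  · -- prec1
    constructor
    · constructor
      · intro x hx
        by_cases hr : x ∈ Set.range da
        · obtain ⟨k, rfl⟩ := hr
          exact Or.inr ((memT r.A k).mpr (hqr.1 (h.2.1 k hx)))
        · exact Or.inl ⟨hx, hr⟩
      · rintro x (hx | ⟨k, hk, rfl⟩)
        · exact (hC2sub hx).1
        · exact hrangeC k hk
    · intro hh
      exact absurd hh.2 (by rw [hB]; simp [Set.not_infinite])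
  · -- AA s da r db
    refine ⟨h1, ?_, ?_⟩
    · rintro k (⟨_, hk⟩ | hk)
      · exact absurd ⟨k, rfl⟩ hk
      · exact (memT r.A k).mp hk
    · rintro k (hk | hk)
      · exact absurd ⟨k, rfl⟩ (hC1sub hk).2
      · exact Or.inr ((memT r.B k).mp hk)
  · -- AA r db s da
    refine ⟨fun k l => (h1 k l).symm, ?_, ?_⟩
    · intro k hk
      exact Or.inr ((memT r.A k).mpr hk)
    · intro k hk
      exact Or.inr (Or.inr ((memT r.B k).mpr hk))
end

section
/- (Forth condition for 𝔸, empty-E case, Claim 6.) In the setting where ((A,B,C), ā) 𝔸 ((D,E,F), b̄) with E = ∅, (J,K,L) ⊴ (A,B,C), and D \ {b̄} = D₁ ∪ D₂ is a partition into two disjoint infinite sets chosen so that if both D ∩ v₁ and D ∩ v₂ are infinite then (D \ {b̄}) ∩ v₂ ⊆ D₁ and (D \ {b̄}) ∩ v₁ ⊆ D₂; define G = D₁ ∪ [ā↦b̄](J), H = D₂ ∪ [ā↦b̄](K), I = (F \ {b̄}) ∪ [ā↦b̄](L). Then: if v ⊴ (G,H,I) and H ∩ v₂ is infinite, then E ∩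 v₂ is infinite (i.e., this case cannot arise, yielding a contradiction since E = ∅). -/
set_option linter.constructorNameAsVariable false

/-- forth condition for 𝔸, empty-E case, Claim 6. -/
theorem stmt17 {n : ℕ} (p q r : QP) (da db : Fin n → ℕ+)
    (h : AA n p da q db) (hE : q.B = ∅) (hrp : r.le p)
    (D₁ D₂ : Set ℕ+) (hD : D₁ ∪ D₂ = q.A \ Set.range db) (hDdisj : Disjoint D₁ D₂)
    (hD₁ : D₁.Infinite) (hD₂ : D₂.Infinite)
    (hchoice : (q.A ∩ v1).Infinite ∧ (q.A ∩ v2).Infinite →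
      (q.A \ Set.range db) ∩ v2 ⊆ D₁ ∧ (q.A \ Set.range db) ∩ v1 ⊆ D₂) :
    (v1 ⊆ D₁ ∪ transfer da db r.A ∧
        ((q.C \ Set.range db) ∪ transfer da db r.C) ⊆ v3 ∧
        ((D₂ ∪ transfer da db r.B) ∩ v2).Infinite) →
      (q.B ∩ v2).Infinite := by
  rintro ⟨hG, hI, hH⟩
  exfalso
  have htfin : ∀ X : Set ℕ+, (transfer da db X).Finite :=
    fun X => ((Set.toFinite (da ⁻¹' X)).image db)
  have hD₁sub : D₁ ⊆ q.A \ Set.range db := by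
    rw [← hD]; exact Set.subset_union_left
  have hD₂sub : D₂ ⊆ q.A \ Set.range db := by
    rw [← hD]; exact Set.subset_union_right
  have hv1inf : (v1 \ transfer da db r.A).Infinite :=
    (infinite_mod (by norm_num) (by norm_num)).diff (htfin _)
  have hqA1 : (q.A ∩ v1).Infinite := by
    apply hv1inf.mono
    rintro x ⟨hx1, hx2⟩
    rcases hG hx1 with h1 | h1
    · exact ⟨(hD₁sub h1).1, hx1⟩
    · exact absurd h1 hx2
  have hD2v2 : (D₂ ∩ v2).Infinite := by
    have hsub : ((D₂ ∪ transfer da db r.B) ∩ v2) ⊆ (D₂ ∩ v2) ∪ transfer da db r.B := by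
      rintro x ⟨h1 | h1, h2⟩
      · exact Or.inl ⟨h1, h2⟩
      · exact Or.inr h1
    rcases Set.infinite_union.mp (hH.mono hsub) with h1 | h1
    · exact h1
    · exact absurd h1 (htfin _).not_infinite
  have hqA2 : (q.A ∩ v2).Infinite :=
    hD2v2.mono (fun x hx => ⟨(hD₂sub hx.1).1, hx.2⟩)
  obtain ⟨hc1, _⟩ := hchoice ⟨hqA1, hqA2⟩
  obtain ⟨x, hx2, hxv⟩ := hD2v2.nonempty
  exact Set.disjoint_right.mp hDdisj hx2 (hc1 ⟨hD₂sub hx2, hxv⟩)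
end
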